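/- arXiv:math/0611120 — 3 statements merged into one kernel-verified Lean document; each statement's English description precedes it below -/
import Mathlib

section
/- Let V be a vertex operator algebra and let W be a complex vector space equipped with a linear map Y_W(·,x) satisfying the truncation condition and the Jacobi identity for Y_W. For u ∈ V and w ∈ W, let l(u,w) be the smallest nonnegative integer such that weak associativity (x_0+x_2)^{l(u,w)} Y_W(u,x_0+x_2)Y_W(v,x_2)w = (x_0+x_2)^{l(u,w)} Y_W(Y(u,x_0)v,x_2)w holds for all v ∈ V. Then for all u, v ∈ V and w ∈ W: lim_{x_0 → −x_2+x_1} ( (x_0+x_2)^{l(u,w)} Y_W(Y(u,x_0)v,x_2)w ) = x_1^{l(u,w)} Y_W(v,x_2) Y_W(u,x_1) w, where the formal limit replaces each power of x_0 by the corresponding binomially expanded power of −x_2+x_1. -/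
/-!
Fix `v, P, Q` and put `E s = u_{l-1-s} v_{s-P-Q-1} w`, `G j = (u_j v)_{l-P-Q-2-j} w`, and let
`R A` be the coefficient of `x₀^A` in `(x₀+x₂)^l Y_W(Y(u,x₀)v,x₂)w`. By definition `R` is the
convolution of `G` with `binom(l, ·)`, and weak associativity makes `R` the binomial transform
`R A = ∑ᵢ binom(A+i, i) E(A+i)` of `E`; together with truncation, the two descriptions show that
`R` is finitely supported.

Substituting `x₀ = -x₂ + x₁` and expanding in nonnegative powers of `x₁` differs from expanding
`(x₁ - x₂)^A` in nonnegative powers of `x₂` by a delta-function term supported on `A < 0`.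
The latter expansion of `R` is the inverse binomial transform, which returns `E P`; by
Chu–Vandermonde the delta-function term is `∑ₙ binom(l-1-P, n) G n`. The Jacobi identity with
`n = 0` (the commutator formula) says that `E P - ∑ₙ binom(l-1-P, n) G n = v_{-Q-1} u_{l-P-1} w`.
-/

noncomputable section

open scoped BigOperators

/-- Generalized binomial coefficient `z(z-1)⋯(z-k+1)/k!`. -/
def cbinom (z : ℂ) (k : ℕ) : ℂ :=
  (∏ j ∈ Finset.range k, (z - (j : ℂ))) / (k.factorial : ℂ)

/-- Generalized binomial coefficient with integer lower index (zero for negative index). -/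
def cbinomZ (z : ℂ) (k : ℤ) : ℂ := if 0 ≤ k then cbinom z k.toNat else 0

/-- A vertex operator algebra `(V, Y, 𝟙, ω)` over `ℂ`, described in terms of the modes
`vₙ = Y v n` of the vertex operators `Y(v,x) = ∑ₙ vₙ x^{-n-1}`.  The Jacobi identity is
expressed in its equivalent component (Borcherds identity) form: it is the equality of the
coefficients of `x₀^{-n-1} x₁^{-a-1} x₂^{-b-1}` on the two sides of the formal-variable
Jacobi identity, with all binomials expanded by the binomial expansion convention. -/
structure VOA (V : Type) [AddCommGroup V] [Module ℂ V] where
  Y : V →ₗ[ℂ] ℤ → Module.End ℂ V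
  vac : V
  conf : V
  cc : ℂ
  grade : ℤ → Submodule ℂ V
  internal : DirectSum.IsInternal grade
  findim : ∀ n : ℤ, FiniteDimensional ℂ (grade n)
  bddBelow : ∃ N : ℤ, ∀ n < N, grade n = ⊥
  trunc : ∀ u v : V, ∃ N : ℤ, ∀ n ≥ N, Y u n v = 0
  vacuum : ∀ n : ℤ, Y vac n = if n = -1 then 1 else 0
  creation_zero : ∀ (v : V) (n : ℤ), 0 ≤ n → Y v n vac = 0
  creation_id : ∀ v : V, Y v (-1) vac = v
  virasoro : ∀ m n : ℤ,
    Y conf (m + 1) * Y conf (n + 1) - Y conf (n + 1) * Y conf (m + 1)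
      = ((m - n : ℤ) : ℂ) • Y conf (m + n + 1)
        + (if m + n = 0 then ((m ^ 3 - m : ℤ) : ℂ) / 12 * cc else 0) •
            (1 : Module.End ℂ V)
  L0_grade : ∀ n : ℤ, ∀ v ∈ grade n, Y conf 1 v = (n : ℂ) • v
  L_neg_one : ∀ (u : V) (n : ℤ), Y (Y conf 0 u) n = (-n : ℂ) • Y u (n - 1)
  jacobi : ∀ (u v w : V) (a n b : ℤ),
    (∑ᶠ i : ℕ, cbinom (a : ℂ) i • Y (Y u (n + i) v) (a + b - i) w)
      = (∑ᶠ i : ℕ, ((-1 : ℂ) ^ i * cbinom (n : ℂ) i) • Y u (a + n - i) (Y v (b + i) w))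
        - (-1 : ℂ) ^ n •
            (∑ᶠ i : ℕ, ((-1 : ℂ) ^ i * cbinom (n : ℂ) i) • Y v (b + n - i) (Y u (a + i) w))

variable {V W : Type} [AddCommGroup V] [Module ℂ V] [AddCommGroup W] [Module ℂ W]

/-- Truncation condition for a module-type vertex operator map. -/
def TruncW (YW : V →ₗ[ℂ] ℤ → Module.End ℂ W) : Prop :=
  ∀ (v : V) (w : W), ∃ N : ℤ, ∀ n ≥ N, YW v n w = 0

/-- The Jacobi identity for a module map `Y_W`, in component form. -/
def JacobiW (𝒜 : VOA V) (YW : V →ₗ[ℂ] ℤ → Module.End ℂ W) : Prop :=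
  ∀ (u v : V) (w : W) (a n b : ℤ),
    (∑ᶠ i : ℕ, cbinom (a : ℂ) i • YW (𝒜.Y u (n + i) v) (a + b - i) w)
      = (∑ᶠ i : ℕ, ((-1 : ℂ) ^ i * cbinom (n : ℂ) i) • YW u (a + n - i) (YW v (b + i) w))
        - (-1 : ℂ) ^ n •
            (∑ᶠ i : ℕ, ((-1 : ℂ) ^ i * cbinom (n : ℂ) i) • YW v (b + n - i) (YW u (a + i) w))

/-- Weak associativity with exponent `l`:
`(x₀+x₂)^l Y_W(u,x₀+x₂)Y_W(v,x₂)w = (x₀+x₂)^l Y_W(Y(u,x₀)v,x₂)w`, as the equality of the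
coefficients of `x₀^A x₂^B`, all binomials expanded by the binomial expansion convention
(in nonnegative integral powers of `x₂`). -/
def WeakAssocW (𝒜 : VOA V) (YW : V →ₗ[ℂ] ℤ → Module.End ℂ W) (l : ℕ)
    (u v : V) (w : W) : Prop :=
  ∀ A B : ℤ,
    (∑ᶠ i : ℕ, cbinom ((A : ℂ) + (i : ℂ)) i •
        YW u ((l : ℤ) - 1 - A - i) (YW v ((i : ℤ) - B - 1) w))
      = ∑ᶠ i : ℕ, cbinom (l : ℂ) i •
          YW (𝒜.Y u ((l : ℤ) - i - A - 1) v) ((i : ℤ) - B - 1) w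

open Finset

theorem cbinom_eq_choose (z : ℂ) (k : ℕ) : cbinom z k = Ring.choose z k := by
  rw [Ring.choose_eq_smul, ← Polynomial.aeval_eq_smeval, Polynomial.aeval_def,
    Polynomial.eval₂_eq_eval_map, descPochhammer_map, descPochhammer_eval_eq_prod_range, cbinom,
    smul_eq_mul, div_eq_inv_mul]

theorem cbinom_add (x y : ℂ) (n : ℕ) :
    cbinom (x + y) n = ∑ p ∈ antidiagonal n, cbinom x p.1 * cbinom y p.2 := by
  simp only [cbinom_eq_choose]
  exact Ring.add_choose_eq n (Commute.all x y)

theorem cbinom_natCast (n k : ℕ) : cbinom n k = n.choose k := by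
  rw [cbinom_eq_choose, Ring.choose_natCast]

theorem cbinom_neg (z : ℂ) (n : ℕ) : cbinom (-z) n = (-1) ^ n * cbinom (z + n - 1) n := by
  rw [cbinom_eq_choose, cbinom_eq_choose, Ring.choose_neg, Int.negOnePow_def, Units.smul_def]
  simp

theorem cbinom_neg_natCast_sub_one (m n : ℕ) :
    cbinom (-m - 1) n = (-1) ^ n * (m + n).choose n := by
  rw [show -(m : ℂ) - 1 = -(m + 1) by ring, cbinom_neg, ← cbinom_natCast]; push_cast; ring_nf

theorem cbinomZ_natCast (z : ℂ) (k : ℕ) : cbinomZ z k = cbinom z k := by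
  simp [cbinomZ]

theorem cbinomZ_of_neg (z : ℂ) {k : ℤ} (hk : k < 0) : cbinomZ z k = 0 := by
  simp [cbinomZ, hk.not_ge]

theorem cbinomZ_natCast_natCast (n : ℕ) (k : ℤ) :
    cbinomZ n k = if 0 ≤ k then (n.choose k.toNat : ℂ) else 0 := by
  simp [cbinomZ, cbinom_natCast]

/-- The left side is the coefficient of `x^P` in `(-1 + x)^A`, the first term on the right the
one in `(x - 1)^A` expanded in powers of `x⁻¹`; their difference is a derivative of the formal
delta function, which only shows up for `A < 0`. -/
theorem neg_one_zpow_mul_cbinomZ (A P : ℤ) :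
    (-1 : ℂ) ^ (A - P) * cbinomZ A P = cbinomZ (-P - 1) (A - P) - cbinomZ (-P - 1) (-A - 1) := by
  rcases P with p | q
  · simp only [Int.ofNat_eq_natCast, Int.cast_natCast]
    rcases A with a | m
    · simp only [Int.ofNat_eq_natCast, Int.cast_natCast]
      rw [cbinomZ_of_neg _ (show -(a : ℤ) - 1 < 0 by omega), sub_zero, cbinomZ_natCast,
        cbinom_natCast]
      rcases lt_or_ge a p with hap | hap
      · rw [Nat.choose_eq_zero_of_lt hap, cbinomZ_of_neg _ (by omega)]
        simp
      · obtain ⟨k, rfl⟩ := Nat.exists_eq_add_of_le hap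
        rw [show ((p + k : ℕ) : ℤ) - p = k by push_cast; ring, zpow_natCast, cbinomZ_natCast,
          cbinom_neg_natCast_sub_one, Nat.choose_symm_add]
    · rw [Int.negSucc_eq, show - -((m : ℤ) + 1) - 1 = m by ring, cbinomZ_natCast,
        cbinomZ_of_neg _ (show -((m : ℤ) + 1) - p < 0 by omega), zero_sub,
        show -((m : ℤ) + 1) - p = -((m + 1 + p : ℕ) : ℤ) by push_cast; ring, cbinomZ_natCast,
        zpow_neg, zpow_natCast, ← inv_pow, inv_neg_one,
        show ((-((m : ℤ) + 1) : ℤ) : ℂ) = -(m : ℂ) - 1 by push_cast; ring,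
        cbinom_neg_natCast_sub_one, cbinom_neg_natCast_sub_one, add_comm p m, Nat.choose_symm_add]
      have hsq : ((-1 : ℂ) ^ p) ^ 2 = 1 := by rw [← pow_mul, pow_mul', neg_one_sq, one_pow]
      linear_combination (-(-1 : ℂ) ^ m * ((m + p).choose p : ℂ)) * hsq
  · rw [cbinomZ_of_neg _ (Int.negSucc_lt_zero q), mul_zero, Int.negSucc_eq,
      show -(((-((q : ℤ) + 1)) : ℤ) : ℂ) - 1 = (q : ℂ) by push_cast; ring,
      cbinomZ_natCast_natCast, cbinomZ_natCast_natCast]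
    split_ifs with h₁ h₂ h₂
    · rw [Nat.choose_symm_of_eq_add (show q = (A - -((q : ℤ) + 1)).toNat + (-A - 1).toNat by omega),
        sub_self]
    · rw [Nat.choose_eq_zero_of_lt (by omega), Nat.cast_zero, sub_zero]
    · rw [Nat.choose_eq_zero_of_lt (by omega), Nat.cast_zero, zero_sub, neg_zero]
    · rw [sub_zero]

theorem cbinom_natCast_sub_one_self (n : ℕ) : cbinom (n - 1) n = if n = 0 then 1 else 0 := by
  rcases n with _ | n
  · simp [cbinom]
  · rw [show ((n + 1 : ℕ) : ℂ) - 1 = n by push_cast; ring, cbinom_natCast,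
      Nat.choose_eq_zero_of_lt n.lt_succ_self]
    simp

section Summation

theorem finsum_smul_finsum_eq_finsum_antidiagonal {R M : Type*} [Semiring R] [AddCommMonoid M]
    [Module R M] (a : ℕ → R) (b : ℕ → ℕ → R) {g : ℕ → M} {N : ℕ} (hg : ∀ n, N ≤ n → g n = 0) :
    ∑ᶠ m, a m • ∑ᶠ k, b (m + k) k • g (m + k)
      = ∑ᶠ n, (∑ p ∈ antidiagonal n, a p.1 * b n p.2) • g n := by
  have inner (m : ℕ) :
      ∑ᶠ k, b (m + k) k • g (m + k) = ∑ k ∈ range (N - m), b (m + k) k • g (m + k) :=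
    finsum_eq_sum_of_support_subset _ <| Function.support_subset_iff'.2 fun k hk => by
      rw [hg _ (by rw [coe_range, Set.mem_Iio] at hk; omega), smul_zero]
  simp_rw [inner]
  rw [finsum_eq_sum_of_support_subset (s := range N) _ <| Function.support_subset_iff'.2
      fun m hm => by
        rw [Nat.sub_eq_zero_of_le (by simpa using hm), range_zero, sum_empty, smul_zero],
    finsum_eq_sum_of_support_subset (s := range N) _ <| Function.support_subset_iff'.2
      fun n hn => by rw [hg _ (by simpa using hn), smul_zero]]
  simp_rw [smul_sum, smul_smul, Nat.sum_antidiagonal_eq_sum_range_succ_mk, sum_smul]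
  rw [← sum_range_diag_flip N (fun j i => (a j * b (j + i) i) • g (j + i))]
  refine sum_congr rfl fun n _ => sum_congr rfl fun j hj => ?_
  rw [Nat.add_sub_cancel' (by simpa [Nat.lt_succ_iff] using hj)]

variable {M : Type*} [AddCommGroup M] [Module ℂ M]

theorem finsum_cbinomZ_smul (b : ℂ) (f : ℤ → M) :
    ∑ᶠ n : ℤ, cbinomZ b n • f n = ∑ᶠ m : ℕ, cbinom b m • f m := by
  have hsupp : (Function.support fun n : ℤ => cbinomZ b n • f n) ⊆ Set.range ((↑) : ℕ → ℤ) :=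
    Function.support_subset_iff'.2 fun n hn => by
      rw [cbinomZ_of_neg b (by simpa using hn), zero_smul]
  rw [← finsum_mem_univ, ← finsum_mem_inter_support_eq _ (Set.range ((↑) : ℕ → ℤ)),
    finsum_mem_range Nat.cast_injective]
  · simp only [cbinomZ_natCast]
  · rw [Set.univ_inter, Set.inter_eq_right.2 hsupp]

theorem finsum_neg_one_zpow_mul_cbinomZ_smul (P : ℤ) {f : ℤ → M} (hf : f.HasFiniteSupport) :
    ∑ᶠ A : ℤ, ((-1 : ℂ) ^ (A - P) * cbinomZ A P) • f A
      = ∑ᶠ m : ℕ, cbinom (-P - 1) m • f (P + m) - ∑ᶠ m : ℕ, cbinom (-P - 1) m • f (-1 - m) := by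
  simp_rw [neg_one_zpow_mul_cbinomZ, sub_smul]
  rw [finsum_sub_distrib (hf.fun_smul_right _) (hf.fun_smul_right _),
    ← finsum_cbinomZ_smul _ (fun n => f (P + n)), ← finsum_cbinomZ_smul _ (fun n => f (-1 - n))]
  congr 1
  · rw [← finsum_comp_equiv (Equiv.addLeft P)]
    simp
  · rw [← finsum_comp_equiv (Equiv.subLeft (-1))]
    simp

theorem finsum_cbinom_natCast_smul_reflect (l : ℕ) (H : ℤ → M) :
    ∑ᶠ i : ℕ, cbinom l i • H (l - i) = ∑ᶠ k : ℕ, cbinom l k • H k := by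
  have hsupp (f : ℕ → M) : ∑ᶠ i, cbinom l i • f i = ∑ i ∈ range (l + 1), cbinom l i • f i :=
    finsum_eq_sum_of_support_subset _ <| Function.support_subset_iff'.2 fun i hi => by
      rw [cbinom_natCast, Nat.choose_eq_zero_of_lt (by simpa [Nat.lt_succ_iff] using hi),
        Nat.cast_zero, zero_smul]
  rw [hsupp (fun i => H (l - i)), hsupp (fun k => H k), ← sum_range_reflect]
  refine sum_congr rfl fun i hi => ?_
  have hil : i ≤ l := by simpa [Nat.lt_succ_iff] using hi
  rw [Nat.add_sub_cancel, cbinom_natCast, cbinom_natCast, Nat.choose_symm hil, Nat.cast_sub hil,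
    sub_sub_cancel]

theorem finsum_cbinom_smul_inversion (P : ℤ) {E : ℤ → M} {S : ℤ} (hE : ∀ s, S ≤ s → E s = 0) :
    ∑ᶠ m : ℕ, cbinom (-P - 1) m • ∑ᶠ i : ℕ, cbinom (((P + m : ℤ) : ℂ) + i) i • E (P + m + i)
      = E P := by
  calc _ = ∑ᶠ m : ℕ, cbinom (-P - 1) m • ∑ᶠ i : ℕ,
          cbinom (P + (m + i : ℕ)) i • E (P + (m + i : ℕ)) := by
        push_cast
        simp only [add_assoc]
    _ = ∑ᶠ n : ℕ, (if n = 0 then 1 else 0 : ℂ) • E (P + n) := by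
        rw [finsum_smul_finsum_eq_finsum_antidiagonal (cbinom (-P - 1))
          (fun n k => cbinom (P + n) k) (g := fun n : ℕ => E (P + n)) (N := (S - P).toNat)
          fun n hn => hE _ (by omega)]
        simp_rw [← cbinom_add, show ∀ n : ℂ, -(P : ℂ) - 1 + (P + n) = n - 1 by intro n; ring,
          cbinom_natCast_sub_one_self]
    _ = E P := by
        rw [finsum_eq_single _ 0 fun n hn => by rw [if_neg hn, zero_smul]]
        simp

theorem finsum_cbinom_smul_finsum_cbinom_natCast_smul (b : ℂ) (l : ℕ) {G : ℤ → M} {N : ℤ}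
    (hG : ∀ j, N ≤ j → G j = 0) :
    ∑ᶠ m : ℕ, cbinom b m • ∑ᶠ i : ℕ, cbinom l i • G (m + l - i)
      = ∑ᶠ n : ℕ, cbinom (b + l) n • G n := by
  have hreflect (m : ℕ) :
      ∑ᶠ i : ℕ, cbinom l i • G (m + l - i) = ∑ᶠ k : ℕ, cbinom l k • G ((m + k : ℕ) : ℤ) := by
    simp_rw [add_sub_assoc, Nat.cast_add]
    exact finsum_cbinom_natCast_smul_reflect l (fun j => G (m + j))
  simp_rw [hreflect]
  rw [finsum_smul_finsum_eq_finsum_antidiagonal (cbinom b) (fun _ k => cbinom l k)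
    (g := fun n : ℕ => G n) (N := N.toNat) fun n hn => hG _ (by omega)]
  simp_rw [← cbinom_add]

theorem finsum_neg_one_zpow_mul_cbinomZ_smul_eq_sub {E G R : ℤ → M} (l : ℕ) (P : ℤ) {S N : ℤ}
    (hE : ∀ s, S ≤ s → E s = 0) (hG : ∀ j, N ≤ j → G j = 0)
    (hRE : ∀ A, R A = ∑ᶠ i : ℕ, cbinom ((A : ℂ) + i) i • E (A + i))
    (hRG : ∀ A, R A = ∑ᶠ i : ℕ, cbinom l i • G (l - 1 - A - i)) :
    ∑ᶠ A : ℤ, ((-1 : ℂ) ^ (A - P) * cbinomZ A P) • R A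
      = E P - ∑ᶠ n : ℕ, cbinom ((l - 1 - P : ℤ) : ℂ) n • G n := by
  have hR : R.HasFiniteSupport := (Set.finite_Ico (-N) S).subset <|
    Function.support_subset_iff'.2 fun A hA => by
      rcases le_or_gt S A with hSA | hAS
      · rw [hRE, finsum_eq_zero_of_forall_eq_zero fun i => by rw [hE _ (by omega), smul_zero]]
      · rw [hRG, finsum_eq_zero_of_forall_eq_zero fun i => ?_]
        rcases le_or_gt i l with hil | hli
        · rw [hG _ (by rw [Set.mem_Ico] at hA; omega), smul_zero]
        · rw [cbinom_natCast, Nat.choose_eq_zero_of_lt hli, Nat.cast_zero, zero_smul]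
  rw [finsum_neg_one_zpow_mul_cbinomZ_smul P hR]
  congr 1
  · simp_rw [hRE]
    exact finsum_cbinom_smul_inversion P hE
  · simp_rw [hRG, show ∀ m i : ℕ, (l : ℤ) - 1 - (-1 - m) - i = m + l - i by intros; ring,
      finsum_cbinom_smul_finsum_cbinom_natCast_smul (-P - 1) l hG]
    rw [show ((l - 1 - P : ℤ) : ℂ) = -P - 1 + l by push_cast; ring]

end Summation

theorem JacobiW.commutator {𝒜 : VOA V} {YW : V →ₗ[ℂ] ℤ → Module.End ℂ W} (hJ : JacobiW 𝒜 YW)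
    (u v : V) (w : W) (a b : ℤ) :
    ∑ᶠ i : ℕ, cbinom a i • YW (𝒜.Y u i v) (a + b - i) w
      = YW u a (YW v b w) - YW v b (YW u a w) := by
  have hδ (f : ℕ → W) : ∑ᶠ i : ℕ, ((-1 : ℂ) ^ i * cbinom ((0 : ℤ) : ℂ) i) • f i = f 0 := by
    rw [finsum_eq_single _ 0 fun i hi => by
      rw [Int.cast_zero, ← Nat.cast_zero, cbinom_natCast, Nat.choose_eq_zero_of_lt (by omega)]
      simp]
    simp [cbinom]
  have h := hJ u v w a 0 b
  rw [hδ, hδ] at h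
  simpa using h

/-- The coefficient of `x₁^P x₂^Q`, with `-x₂ + x₁` expanded in nonnegative powers of `x₁`. -/
theorem statement1_general (𝒜 : VOA V) (YW : V →ₗ[ℂ] ℤ → Module.End ℂ W)
    (hT : TruncW YW) (hJ : JacobiW 𝒜 YW) (u : V) (w : W) (l : ℕ)
    (hl : ∀ v : V, WeakAssocW 𝒜 YW l u v w) :
    ∀ (v : V) (P Q : ℤ),
      (∑ᶠ A : ℤ, ((-1 : ℂ) ^ (A - P) * cbinomZ (A : ℂ) P) •
          (∑ᶠ i : ℕ, cbinom (l : ℂ) i •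
            YW (𝒜.Y u ((l : ℤ) - i - A - 1) v) ((i : ℤ) - (Q - A + P) - 1) w))
        = YW v (-Q - 1) (YW u ((l : ℤ) - P - 1) w) := by
  intro v P Q
  obtain ⟨N, hN⟩ := 𝒜.trunc u v
  obtain ⟨N', hN'⟩ := hT v w
  rw [finsum_neg_one_zpow_mul_cbinomZ_smul_eq_sub l P
      (E := fun s => YW u (l - 1 - s) (YW v (s - P - Q - 1) w))
      (G := fun j => YW (𝒜.Y u j v) (l - 1 - P + (-Q - 1) - j) w)
      (S := N' + P + Q + 1) (N := N)
      (fun s hs => by simp only [hN' (s - P - Q - 1) (by omega), map_zero])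
      (fun j hj => by simp only [hN j hj, map_zero, Pi.zero_apply, LinearMap.zero_apply])
      (fun A => (hl v A (Q - A + P)).symm.trans (finsum_congr fun i => by ring_nf))
      (fun A => finsum_congr fun i => by ring_nf),
    hJ.commutator, sub_self, zero_sub, sub_right_comm (l : ℤ) 1 P, sub_sub_cancel]

/-- Theorem 4.2.  Let `l = l(u,w)` be the smallest nonnegative integer
for which weak associativity holds for all `v`.  Then
`lim_{x₀ → -x₂+x₁} ((x₀+x₂)^l Y_W(Y(u,x₀)v,x₂)w) = x₁^l Y_W(v,x₂)Y_W(u,x₁)w`,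
stated as the equality of the coefficients of `x₁^P x₂^Q`; in the formal limit each power
of `x₀` is replaced by the corresponding binomially expanded power of `-x₂+x₁` (expanded
in nonnegative integral powers of `x₁`). -/
theorem statement1 (𝒜 : VOA V) (YW : V →ₗ[ℂ] ℤ → Module.End ℂ W)
    (hT : TruncW YW) (hJ : JacobiW 𝒜 YW) (u : V) (w : W) (l : ℕ)
    (hl : ∀ v : V, WeakAssocW 𝒜 YW l u v w)
    (hmin : ∀ l' : ℕ, (∀ v : V, WeakAssocW 𝒜 YW l' u v w) → l ≤ l') :
    ∀ (v : V) (P Q : ℤ),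
      (∑ᶠ A : ℤ, ((-1 : ℂ) ^ (A - P) * cbinomZ (A : ℂ) P) •
          (∑ᶠ i : ℕ, cbinom (l : ℂ) i •
            YW (𝒜.Y u ((l : ℤ) - i - A - 1) v) ((i : ℤ) - (Q - A + P) - 1) w))
        = YW v (-Q - 1) (YW u ((l : ℤ) - P - 1) w) :=
  statement1_general 𝒜 YW hT hJ u w l hl
end
end

section
/- Let M be a complex vector space with a linear map Y_M(·,x) satisfying the truncation condition and the twisted Jacobi identity. Then for every u ∈ V and every s ∈ ℤ: lim_{x_1^{1/p} → ω_p^s x^{1/p}} Y_M(ν^{s}u, x_1) = Y_M(u, x), where the formal limit replaces each integral power of the formal variable x_1^{1/p} by the corresponding power of ω_p^s x^{1/p}. -/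
noncomputable section

open scoped BigOperators

variable {V W : Type} [AddCommGroup V] [Module ℂ V] [AddCommGroup W] [Module ℂ W]

section Twisted

variable {V M : Type} [AddCommGroup V] [Module ℂ V] [AddCommGroup M] [Module ℂ M]

/-- Truncation condition for a twisted-module-type vertex operator map.  Here, for a fixed
period `p`, the map `Y_M` is encoded by its modes in `(1/p)ℤ`, rescaled by `p`:
`YM v N` is the mode `v^ν_{N/p}`, the coefficient of `x^{-N/p-1}` in `Y_M(v,x)`. -/
def TwTrunc (YM : V →ₗ[ℂ] ℤ → Module.End ℂ M) : Prop :=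
  ∀ (v : V) (w : M), ∃ N : ℤ, ∀ n ≥ N, YM v n w = 0

/-- The twisted Jacobi identity in component form: the equality of the coefficients of
`x₀^{-n-1} x₁^{-a/p-1} x₂^{-b/p-1}` on the two sides of the twisted Jacobi identity,
with all binomials expanded by the binomial expansion convention. -/
def TwJacobi (p : ℕ) (𝒜 : VOA V) (ν : V ≃ₗ[ℂ] V) (ωp : ℂ)
    (YM : V →ₗ[ℂ] ℤ → Module.End ℂ M) : Prop :=
  ∀ (u v : V) (w : M) (n a b : ℤ),
    (∑ᶠ i : ℕ, ((-1 : ℂ) ^ i * cbinom (n : ℂ) i) •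
        YM u (a + (p : ℤ) * (n - i)) (YM v (b + (p : ℤ) * i) w))
      - (-1 : ℂ) ^ n •
          (∑ᶠ i : ℕ, ((-1 : ℂ) ^ i * cbinom (n : ℂ) i) •
            YM v (b + (p : ℤ) * (n - i)) (YM u (a + (p : ℤ) * i) w))
      = (p : ℂ)⁻¹ • ∑ r ∈ Finset.range p, ωp ^ (-(r : ℤ) * a) •
          (∑ᶠ i : ℕ, cbinom ((a : ℂ) / (p : ℂ)) i •
            YM (𝒜.Y ((ν ^ r) u) (n + i) v) (a + b - (p : ℤ) * i) w)

/-- Weak commutativity for twisted vertex operators with exponent `k`: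
`(x₁-x₂)^k Y_M(u,x₁)Y_M(v,x₂) = (x₁-x₂)^k Y_M(v,x₂)Y_M(u,x₁)`, as the equality of the
coefficients of `x₁^{a/p} x₂^{b/p}` (endomorphism-valued). -/
def TwWC (p : ℕ) (YM : V →ₗ[ℂ] ℤ → Module.End ℂ M) (k : ℕ) (u v : V) : Prop :=
  ∀ a b : ℤ,
    (∑ᶠ i : ℕ, ((-1 : ℂ) ^ i * cbinom (k : ℂ) i) •
        (YM u ((p : ℤ) * ((k : ℤ) - i) - a - p) * YM v ((p : ℤ) * i - b - p)))
      = ∑ᶠ i : ℕ, ((-1 : ℂ) ^ i * cbinom (k : ℂ) i) •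
          (YM v ((p : ℤ) * i - b - p) * YM u ((p : ℤ) * ((k : ℤ) - i) - a - p))

/-- Modified weak associativity for twisted vertex operators with exponent `k`:
`lim_{x₁^{1/p} → ωₚ^s (x₂+x₀)^{1/p}} ((x₁-x₂)^k Y_M(u,x₁)Y_M(v,x₂))
   = x₀^k Y_M(Y(ν^{-s}u,x₀)v,x₂)` for all `s ∈ ℤ`, stated as the equality of the
coefficients of `x₀^n x₂^{C/p}` applied to an arbitrary vector `w`.  In the formal limit,
each integral power of `x₁^{1/p}` is replaced by the corresponding binomially expanded
power of `ωₚ^s (x₂+x₀)^{1/p}`. -/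
def TwMWA (p : ℕ) (𝒜 : VOA V) (ν : V ≃ₗ[ℂ] V) (ωp : ℂ)
    (YM : V →ₗ[ℂ] ℤ → Module.End ℂ M) (k : ℕ) (u v : V) : Prop :=
  ∀ (s n C : ℤ) (w : M),
    (∑ᶠ a : ℤ, (ωp ^ (s * a) * cbinomZ ((a : ℂ) / (p : ℂ)) n) •
        (∑ᶠ i : ℕ, ((-1 : ℂ) ^ i * cbinom (k : ℂ) i) •
          YM u ((p : ℤ) * ((k : ℤ) - i) - a - p)
            (YM v ((p : ℤ) * i - (C - a + (p : ℤ) * n) - p) w)))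
      = YM (𝒜.Y ((ν ^ (-s)) u) ((k : ℤ) - n - 1) v) (-C - p) w

end Twisted

/-!
Put `v = 𝟙` and `n = -1` in the twisted Jacobi identity, once with `u` in the first slot and
once in the second: the two left-hand sides agree, and the right-hand sides give
`∑_{r<p} ωₚ^{-rc} Y_M(ν^r u)_c = p · Y_M(u)_c`. The summand is `p`-periodic in `r`, so replacing
`u` by `ν^t u` only shifts the range of summation; comparing gives
`Y_M(ν^t u)_c = ωₚ^{tc} Y_M(u)_c`, and with `c = A` the factors `ωₚ^{±sA}` cancel up to
`ωₚ^{-sp} = 1`.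
-/

theorem Function.Periodic.sum_range_comp_add {M : Type*} [AddCommMonoid M] {g : ℤ → M}
    {p : ℕ} (hg : Function.Periodic g p) (t : ℤ) :
    ∑ r ∈ Finset.range p, g (r + t) = ∑ r ∈ Finset.range p, g r := by
  have shift_one : ∀ h : ℤ → M, Function.Periodic h p →
      ∑ r ∈ Finset.range p, h (r + 1) = ∑ r ∈ Finset.range p, h r := by
    intro h hh
    rcases p with _ | q
    · simp
    · have hlast : h ((q + 1 : ℕ) : ℤ) = h 0 := by simpa using hh 0
      rw [Finset.sum_range_succ, Finset.sum_range_succ' (fun r : ℕ => h r)]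
      push_cast at hlast ⊢
      rw [hlast, add_comm]
  have hshift : ∀ k : ℤ, Function.Periodic (fun r => g (r + k)) p := fun k r => by
    simp only [add_right_comm r, hg _]
  induction t using Int.induction_on with
  | zero => simp
  | succ k ih =>
    rw [← ih, ← shift_one _ (hshift k)]
    simp only [add_assoc, add_comm (1 : ℤ)]
  | pred k ih =>
    rw [← ih, ← shift_one _ (hshift (-k - 1))]
    simp only [add_assoc, add_sub_cancel]

section TwistedJacobiVacuum

variable {V M : Type} [AddCommGroup V] [Module ℂ V] [AddCommGroup M] [Module ℂ M]
  (p : ℕ) (𝒜 : VOA V) (ν : V ≃ₗ[ℂ] V) (ωp : ℂ) (YM : V →ₗ[ℂ] ℤ → Module.End ℂ M)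

/-- The coefficient of `x₀^{-n-1} x₁^{-a/p-1} x₂^{-b/p-1}` in the right-hand side
`(1/p) x₂^{-1} ∑_r δ(ωₚ^r ((x₁-x₀)/x₂)^{1/p}) Y_M(Y(ν^r u,x₀)v,x₂)` of the twisted Jacobi
identity. -/
def twIterate (u v : V) (w : M) (n a b : ℤ) : M :=
  (p : ℂ)⁻¹ • ∑ r ∈ Finset.range p, ωp ^ (-(r : ℤ) * a) •
    (∑ᶠ i : ℕ, cbinom ((a : ℂ) / (p : ℂ)) i •
      YM (𝒜.Y ((ν ^ r) u) (n + i) v) (a + b - (p : ℤ) * i) w)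

variable {p 𝒜 ν ωp YM}

/-- At `n = -1` the sign `(-1)^{-1} = -1` turns the left-hand side of the twisted Jacobi
identity into a sum of two terms that are exchanged by `(u, a) ↔ (v, b)`. -/
theorem TwJacobi.twIterate_neg_one_comm (hJ : TwJacobi p 𝒜 ν ωp YM) (u v : V) (w : M)
    (a b : ℤ) : twIterate p 𝒜 ν ωp YM u v w (-1) a b = twIterate p 𝒜 ν ωp YM v u w (-1) b a := by
  have huv := hJ u v w (-1) a b
  have hvu := hJ v u w (-1) b a
  simp only [zpow_neg_one, inv_neg, inv_one, neg_smul, one_smul, sub_neg_eq_add] at huv hvu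
  rw [twIterate, twIterate, ← huv, ← hvu, add_comm]

theorem twIterate_vac_right (u : V) (w : M) (c : ℤ) :
    twIterate p 𝒜 ν ωp YM u 𝒜.vac w (-1) c 0
      = (p : ℂ)⁻¹ • ∑ r ∈ Finset.range p, ωp ^ (-(r : ℤ) * c) • YM ((ν ^ r) u) c w := by
  unfold twIterate
  congr! 3 with r
  rw [finsum_eq_single _ 0 fun i hi => ?_]
  · simp [𝒜.creation_id, cbinom]
  · simp [𝒜.creation_zero _ _ (by omega : (0 : ℤ) ≤ -1 + i)]

theorem twIterate_vac_left (hp : p ≠ 0) (hν_vac : ν 𝒜.vac = 𝒜.vac) (u : V) (w : M) (c : ℤ) :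
    twIterate p 𝒜 ν ωp YM 𝒜.vac u w (-1) 0 c = YM u c w := by
  have hfix : ∀ r : ℕ, (ν ^ r) 𝒜.vac = 𝒜.vac := fun r => by
    rw [LinearEquiv.pow_apply, Function.iterate_fixed hν_vac]
  have hiter : (∑ᶠ i : ℕ, cbinom (((0 : ℤ) : ℂ) / (p : ℂ)) i •
      YM (𝒜.Y 𝒜.vac (-1 + i) u) (0 + c - (p : ℤ) * i) w) = YM u c w := by
    rw [finsum_eq_single _ 0 fun i hi => ?_]
    · simp [𝒜.vacuum, cbinom]
    · simp [𝒜.vacuum, hi]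
  simp only [twIterate, hfix, hiter, mul_zero, zpow_zero, one_smul, Finset.sum_const,
    Finset.card_range, ← Nat.cast_smul_eq_nsmul ℂ, smul_smul,
    inv_mul_cancel₀ (Nat.cast_ne_zero.mpr hp : (p : ℂ) ≠ 0)]

theorem TwJacobi.sum_range_zpow_smul_pow_apply (hJ : TwJacobi p 𝒜 ν ωp YM) (hp : p ≠ 0)
    (hν_vac : ν 𝒜.vac = 𝒜.vac) (u : V) (c : ℤ) (w : M) :
    ∑ r ∈ Finset.range p, ωp ^ (-(r : ℤ) * c) • YM ((ν ^ r) u) c w = (p : ℂ) • YM u c w := by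
  have h := hJ.twIterate_neg_one_comm u 𝒜.vac w c 0
  rw [twIterate_vac_right, twIterate_vac_left hp hν_vac] at h
  rw [← h, smul_smul, mul_inv_cancel₀ (Nat.cast_ne_zero.mpr hp), one_smul]

theorem TwJacobi.zpow_apply_eq_smul (hJ : TwJacobi p 𝒜 ν ωp YM) (hp : p ≠ 0)
    (hν_vac : ν 𝒜.vac = 𝒜.vac) (hν_per : ν ^ p = 1) (hω : ωp ^ p = 1) (u : V) (t c : ℤ) :
    YM ((ν ^ t) u) c = ωp ^ (t * c) • YM u c := by
  have hω0 : ωp ≠ 0 := by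
    rintro rfl
    simp [zero_pow hp] at hω
  ext w
  set g : ℤ → M := fun r => ωp ^ (-r * c) • YM ((ν ^ r) u) c w with hg_def
  have hg : Function.Periodic g p := fun r => by
    have hνp : ν ^ (r + p) = ν ^ r := by rw [zpow_add, zpow_natCast, hν_per, mul_one]
    have hωp : ωp ^ (-(r + p) * c) = ωp ^ (-r * c) := by
      rw [show -(r + p) * c = -r * c + p * (-c) by ring, zpow_add₀ hω0, zpow_mul ωp p,
        zpow_natCast, hω, one_zpow, mul_one]
    simp only [hg_def, hνp, hωp]
  have hshift : ∀ r : ℕ, ωp ^ (-(r : ℤ) * c) • YM ((ν ^ r) ((ν ^ t) u)) c w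
      = ωp ^ (t * c) • g (r + t) := fun r => by
    rw [hg_def, smul_smul, ← zpow_add₀ hω0, ← LinearEquiv.mul_apply, ← zpow_natCast, ← zpow_add]
    ring_nf
  apply smul_right_injective M (Nat.cast_ne_zero.mpr hp : (p : ℂ) ≠ 0)
  calc (p : ℂ) • YM ((ν ^ t) u) c w
      = ∑ r ∈ Finset.range p, ωp ^ (-(r : ℤ) * c) • YM ((ν ^ r) ((ν ^ t) u)) c w :=
        (hJ.sum_range_zpow_smul_pow_apply hp hν_vac _ c w).symm
    _ = ωp ^ (t * c) • ∑ r ∈ Finset.range p, g r := by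
        rw [Finset.sum_congr rfl fun r _ => hshift r, ← Finset.smul_sum, hg.sum_range_comp_add]
    _ = (p : ℂ) • (ωp ^ (t * c) • YM u c) w := by
        simp only [hg_def, zpow_natCast, hJ.sum_range_zpow_smul_pow_apply hp hν_vac,
          LinearMap.smul_apply]
        exact smul_comm _ _ _

end TwistedJacobiVacuum

section S6

variable {V M : Type} [AddCommGroup V] [Module ℂ V] [AddCommGroup M] [Module ℂ M]

/-- In modes, the formal limit multiplies the coefficient of `x₁^{(-A-p)/p}` in
`Y_M(ν^s u, x₁)` by `ωₚ^{s(-A-p)}`. -/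
theorem statement6_general (p : ℕ) (hp : 0 < p) (𝒜 : VOA V) (ν : V ≃ₗ[ℂ] V)
    (hν_vac : ν 𝒜.vac = 𝒜.vac)
    (hν_per : ν ^ p = 1) (ωp : ℂ) (hωp : IsPrimitiveRoot ωp p)
    (YM : V →ₗ[ℂ] ℤ → Module.End ℂ M)
    (hJ : TwJacobi p 𝒜 ν ωp YM) :
    ∀ (u : V) (s A : ℤ),
      ωp ^ (s * (-A - (p : ℤ))) • YM ((ν ^ s) u) A = YM u A := by
  intro u s A
  rw [hJ.zpow_apply_eq_smul hp.ne' hν_vac hν_per hωp.pow_eq_one, smul_smul,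
    ← zpow_add₀ (hωp.ne_zero hp.ne'), show s * (-A - p) + s * A = p * (-s) by ring, zpow_mul,
    zpow_natCast, hωp.pow_eq_one, one_zpow, one_smul]

/-- Theorem 4.13.  For every `u ∈ V` and `s ∈ ℤ`,
`lim_{x₁^{1/p} → ωₚ^s x^{1/p}} Y_M(ν^s u, x₁) = Y_M(u, x)`.  In terms of modes: the
coefficient of `x₁^{(-A-p)/p}` of `Y_M(ν^s u,x₁)` is multiplied by `ωₚ^{s(-A-p)}` under
the formal limit, and the result equals the corresponding mode of `Y_M(u,x)`. -/
theorem statement6 (p : ℕ) (hp : 0 < p) (𝒜 : VOA V) (ν : V ≃ₗ[ℂ] V)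
    (hν_vac : ν 𝒜.vac = 𝒜.vac) (hν_conf : ν 𝒜.conf = 𝒜.conf)
    (hν_Y : ∀ (u : V) (n : ℤ) (v : V), ν (𝒜.Y u n v) = 𝒜.Y (ν u) n (ν v))
    (hν_per : ν ^ p = 1) (ωp : ℂ) (hωp : IsPrimitiveRoot ωp p)
    (YM : V →ₗ[ℂ] ℤ → Module.End ℂ M)
    (hT : TwTrunc YM) (hJ : TwJacobi p 𝒜 ν ωp YM) :
    ∀ (u : V) (s A : ℤ),
      ωp ^ (s * (-A - (p : ℤ))) • YM ((ν ^ s) u) A = YM u A :=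
  statement6_general p hp 𝒜 ν hν_vac hν_per ωp hωp YM hJ

end S6
end
end

section
/- Let M be a complex vector space with a linear map Y_M(·,x) satisfying the truncation condition and the twisted Jacobi identity. If u ∈ V satisfies νu = ω_p^q u for some q ∈ ℤ, then Y_M(u,x) = ∑_{n ∈ ℤ + q/p} u_n^ν x^{−n−1}; that is, the mode u_n^ν vanishes unless n ∈ ℤ + q/p. -/
noncomputable section

open scoped BigOperators

variable {V W : Type} [AddCommGroup V] [Module ℂ V] [AddCommGroup W] [Module ℂ W]

section S7

variable {V M : Type} [AddCommGroup V] [Module ℂ V] [AddCommGroup M] [Module ℂ M]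

lemma cbinom_zero_right' (z : ℂ) : cbinom z 0 = 1 := by simp [cbinom]

lemma cbinom_zero_left' {i : ℕ} (hi : i ≠ 0) : cbinom 0 i = 0 := by
  unfold cbinom
  rw [Finset.prod_eq_zero (Finset.mem_range.mpr (Nat.pos_of_ne_zero hi)) (by simp)]
  simp

/-- Corollary 4.14.  If `νu = ωₚ^q u` then
`Y_M(u,x) = ∑_{n ∈ ℤ + q/p} u^ν_n x^{-n-1}`, i.e. the mode `u^ν_{N/p}` vanishes unless
`N ≡ q (mod p)`. -/
theorem statement7 (p : ℕ) (hp : 0 < p) (𝒜 : VOA V) (ν : V ≃ₗ[ℂ] V)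
    (hν_vac : ν 𝒜.vac = 𝒜.vac) (hν_conf : ν 𝒜.conf = 𝒜.conf)
    (hν_Y : ∀ (u : V) (n : ℤ) (v : V), ν (𝒜.Y u n v) = 𝒜.Y (ν u) n (ν v))
    (hν_per : ν ^ p = 1) (ωp : ℂ) (hωp : IsPrimitiveRoot ωp p)
    (YM : V →ₗ[ℂ] ℤ → Module.End ℂ M)
    (hT : TwTrunc YM) (hJ : TwJacobi p 𝒜 ν ωp YM)
    (u : V) (q : ℤ) (hu : ν u = ωp ^ q • u) :
    ∀ N : ℤ, ¬ ((p : ℤ) ∣ (N - q)) → YM u N = 0 := by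
  intro N hN
  have hp' : (p : ℂ) ≠ 0 := Nat.cast_ne_zero.mpr hp.ne'
  have hζ0 : ωp ≠ 0 := hωp.ne_zero hp.ne'
  have hpow : ∀ r : ℕ, (ν ^ r) u = ωp ^ (q * (r : ℤ)) • u := by
    intro r
    induction r with
    | zero => simp
    | succ r ih =>
      rw [pow_succ]
      have h : (ν ^ r * ν) u = (ν ^ r) (ν u) := rfl
      rw [h, hu, map_smul, ih, smul_smul, ← zpow_add₀ hζ0]
      congr 1
      push_cast
      ring
  have hvacpow : ∀ r : ℕ, (ν ^ r) 𝒜.vac = 𝒜.vac := by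
    intro r
    induction r with
    | zero => rfl
    | succ r ih =>
      rw [pow_succ]
      have h : (ν ^ r * ν) 𝒜.vac = (ν ^ r) (ν 𝒜.vac) := rfl
      rw [h, hν_vac, ih]
  ext w
  have h1 := hJ u 𝒜.vac w (-1) N 0
  have h2 := hJ 𝒜.vac u w (-1) 0 N
  -- simplify the inner finsum on the RHS of h1
  have inner1 : ∀ r : ℕ,
      (∑ᶠ i : ℕ, cbinom ((N : ℂ) / (p : ℂ)) i •
        YM (𝒜.Y ((ν ^ r) u) (-1 + (i : ℤ)) 𝒜.vac) (N + 0 - (p : ℤ) * (i : ℤ)) w)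
        = ωp ^ (q * (r : ℤ)) • YM u N w := by
    intro r
    rw [finsum_eq_single _ 0 ?_]
    · simp [cbinom_zero_right', hpow r, map_smul, 𝒜.creation_id]
    · intro i hi
      have h0 : (0 : ℤ) ≤ -1 + (i : ℤ) := by
        have : 1 ≤ i := Nat.one_le_iff_ne_zero.mpr hi
        omega
      rw [𝒜.creation_zero _ _ h0]
      simp
  -- simplify the inner finsum on the RHS of h2
  have inner2 : ∀ r : ℕ,
      (∑ᶠ i : ℕ, cbinom (((0 : ℤ) : ℂ) / (p : ℂ)) i •
        YM (𝒜.Y ((ν ^ r) 𝒜.vac) (-1 + (i : ℤ)) u) (0 + N - (p : ℤ) * (i : ℤ)) w)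
        = YM u N w := by
    intro r
    rw [finsum_eq_single _ 0 ?_]
    · simp [cbinom_zero_right', hvacpow r, 𝒜.vacuum]
    · intro i hi
      have : cbinom (((0 : ℤ) : ℂ) / (p : ℂ)) i = 0 := by
        simpa using cbinom_zero_left' hi
      rw [this, zero_smul]
  simp only [inner1] at h1
  simp only [inner2] at h2
  -- the geometric sum in h1 vanishes
  have hsum : (∑ r ∈ Finset.range p, ωp ^ (-(r : ℤ) * N) • (ωp ^ (q * (r : ℤ)) • YM u N w))
      = 0 := by
    have h1r : ∀ r : ℕ, ωp ^ (-(r : ℤ) * N) • (ωp ^ (q * (r : ℤ)) • YM u N w)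
        = ((ωp ^ (q - N)) ^ r) • YM u N w := by
      intro r
      rw [smul_smul, ← zpow_add₀ hζ0, ← zpow_natCast (ωp ^ (q - N)), ← zpow_mul]
      congr 1
      ring
    simp only [h1r]
    rw [← Finset.sum_smul]
    have hne : ωp ^ (q - N) ≠ 1 := by
      intro h
      exact hN (dvd_sub_comm.mp ((hωp.zpow_eq_one_iff_dvd (q - N)).mp h))
    rw [geom_sum_eq hne]
    have hone : (ωp ^ (q - N)) ^ p = 1 := by
      rw [← zpow_natCast (ωp ^ (q - N)), ← zpow_mul, mul_comm, zpow_mul, zpow_natCast,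
        hωp.pow_eq_one, one_zpow]
    rw [hone]
    simp
  rw [hsum, smul_zero] at h1
  -- simplify the RHS of h2 to `YM u N w`
  have hsum2 : ((p : ℂ)⁻¹ • ∑ r ∈ Finset.range p, ωp ^ (-(r : ℤ) * 0) • YM u N w)
      = YM u N w := by
    simp only [mul_zero, zpow_zero, one_smul, Finset.sum_const, Finset.card_range]
    rw [← Nat.cast_smul_eq_nsmul ℂ, smul_smul, inv_mul_cancel₀ hp', one_smul]
  rw [hsum2] at h2
  have hneg : ((-1 : ℂ) ^ (-1 : ℤ)) = -1 := by norm_num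
  rw [hneg, neg_one_smul, sub_neg_eq_add] at h1 h2
  show YM u N w = (0 : Module.End ℂ M) w
  rw [LinearMap.zero_apply, ← h2, add_comm]
  exact h1

end S7
end
end
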